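/- arXiv:2004.10754 — 6 statements merged into one kernel-verified Lean document; each statement's English description precedes it below -/
import Mathlib

section
/- Hamilton's trick, Lipschitz part: Let X be a compact topological space, a < b real numbers, and f : X × [a,b] → ℝ a continuous function whose partial derivative ∂f/∂t with respect to the second variable exists and is continuous on X × [a,b]. Define g(t) := min_{x∈X} f(x,t). Then g is Lipschitz on [a,b], with Lipschitz constant C₃ := max_{(x,t)∈X×[a,b]} |∂f/∂t(x,t)|. -/
open Set

/-- Hamilton's trick, Lipschitz part: for `f : X × [a,b] → ℝ` continuous with
continuous partial derivative in the second variable, the pointwise minimum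
`g t = min_{x ∈ X} f (x, t)` is Lipschitz on `[a,b]` with constant
`C₃ = max_{(x,t) ∈ X × [a,b]} |∂f/∂t (x,t)|`. -/
theorem hamilton_trick_lipschitz
    {X : Type*} [TopologicalSpace X] [CompactSpace X] [Nonempty X]
    (a b : ℝ) (hab : a < b) (f f' : X → ℝ → ℝ)
    (hf : ContinuousOn (fun p : X × ℝ => f p.1 p.2) (Set.univ ×ˢ Set.Icc a b))
    (hderiv : ∀ x : X, ∀ t ∈ Set.Icc a b,
      HasDerivWithinAt (f x) (f' x t) (Set.Icc a b) t)
    (hf' : ContinuousOn (fun p : X × ℝ => f' p.1 p.2) (Set.univ ×ˢ Set.Icc a b))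
    (g : ℝ → ℝ) (hg : ∀ t, g t = ⨅ x : X, f x t)
    (C₃ : ℝ) (hC₃ : C₃ = ⨆ p : X × (Set.Icc a b), |f' p.1 (p.2 : ℝ)|) :
    ∀ s ∈ Set.Icc a b, ∀ t ∈ Set.Icc a b, |g s - g t| ≤ C₃ * |s - t| := by
  have hcont' : Continuous (fun p : X × (Set.Icc a b) => |f' p.1 (p.2 : ℝ)|) := by
    have hc : Continuous (fun p : X × (Set.Icc a b) => f' p.1 (p.2 : ℝ)) := by
      apply hf'.comp_continuous
        (continuous_fst.prodMk (continuous_subtype_val.comp continuous_snd))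
      intro p; exact ⟨mem_univ _, p.2.2⟩
    exact hc.abs
  have hbdd : BddAbove (Set.range fun p : X × (Set.Icc a b) => |f' p.1 (p.2 : ℝ)|) :=
    (isCompact_range hcont').bddAbove
  have hC : ∀ x : X, ∀ t ∈ Set.Icc a b, |f' x t| ≤ C₃ := by
    intro x t ht
    rw [hC₃]
    exact le_ciSup hbdd (x, ⟨t, ht⟩)
  have hlip : ∀ x : X, ∀ s ∈ Set.Icc a b, ∀ t ∈ Set.Icc a b,
      |f x s - f x t| ≤ C₃ * |s - t| := by
    intro x s hs t ht
    have := (convex_Icc a b).norm_image_sub_le_of_norm_hasDerivWithin_le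
      (fun u hu => hderiv x u hu) (fun u hu => hC x u hu) ht hs
    simpa [Real.norm_eq_abs] using this
  have hbb : ∀ t ∈ Set.Icc a b, BddBelow (Set.range fun x : X => f x t) := by
    intro t ht
    have hc : Continuous fun x : X => f x t := by
      apply hf.comp_continuous (continuous_id.prodMk continuous_const)
      intro x; exact ⟨mem_univ _, ht⟩
    exact (isCompact_range hc).bddBelow
  have key : ∀ s ∈ Set.Icc a b, ∀ t ∈ Set.Icc a b, g s - g t ≤ C₃ * |s - t| := by
    intro s hs t ht
    rw [hg s, hg t, sub_le_iff_le_add, ← sub_le_iff_le_add']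
    apply le_ciInf
    intro x
    have h1 : (⨅ x : X, f x s) ≤ f x s := ciInf_le (hbb s hs) x
    have h2 := (abs_le.mp (hlip x s hs t ht)).2
    linarith
  intro s hs t ht
  rw [abs_sub_le_iff]
  refine ⟨key s hs t ht, ?_⟩
  rw [abs_sub_comm]
  exact key t ht s hs
end

section
/- Hamilton's trick, derivative part: Let X be a compact topological space, a < b real numbers, and f : X × [a,b] → ℝ a continuous function whose partial derivative ∂f/∂t with respect to the second variable exists and is continuous on X × [a,b]. Define g(t) := min_{x∈X} f(x,t). If t₀ ∈ (a,b) is a point at which g is differentiable, and x₀ ∈ X satisfies f(x₀,t₀) = g(t₀), then g'(t₀) = ∂f/∂t(x₀,t₀). -/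
open Set

/-- Hamilton's trick, derivative part: for `f : X × [a,b] → ℝ` continuous with
continuous partial derivative in the second variable, and `g t = min_{x ∈ X} f (x, t)`,
if `g` is differentiable at an interior point `t₀` and the minimum at `t₀` is attained
at `x₀`, then `g'(t₀) = ∂f/∂t (x₀, t₀)`. -/
theorem hamilton_trick_derivative
    {X : Type*} [TopologicalSpace X] [CompactSpace X] [Nonempty X]
    (a b : ℝ) (hab : a < b) (f f' : X → ℝ → ℝ)
    (hf : ContinuousOn (fun p : X × ℝ => f p.1 p.2) (Set.univ ×ˢ Set.Icc a b))
    (hderiv : ∀ x : X, ∀ t ∈ Set.Icc a b,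
      HasDerivWithinAt (f x) (f' x t) (Set.Icc a b) t)
    (hf' : ContinuousOn (fun p : X × ℝ => f' p.1 p.2) (Set.univ ×ˢ Set.Icc a b))
    (g : ℝ → ℝ) (hg : ∀ t, g t = ⨅ x : X, f x t)
    (t₀ : ℝ) (ht₀ : t₀ ∈ Set.Ioo a b)
    (d : ℝ) (hd : HasDerivAt g d t₀)
    (x₀ : X) (hx₀ : f x₀ t₀ = g t₀) :
    d = f' x₀ t₀ := by
  -- g t ≤ f x₀ t for t ∈ Icc a b
  have hle : ∀ t ∈ Set.Icc a b, g t ≤ f x₀ t := by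
    intro t ht
    have hcont : ContinuousOn (fun x : X => f x t) Set.univ := by
      have : ContinuousOn (fun x : X => (x, t)) Set.univ :=
        (continuous_id.prodMk continuous_const).continuousOn
      exact hf.comp this (fun x _ => ⟨trivial, ht⟩)
    have hbdd : BddBelow (Set.range fun x : X => f x t) := by
      obtain ⟨z, -, hz⟩ := isCompact_univ.exists_isMinOn Set.univ_nonempty hcont
      exact ⟨f z t, by rintro y ⟨x, rfl⟩; exact hz trivial⟩
    rw [hg t]
    exact ciInf_le hbdd x₀
  -- h has a local min at t₀
  have hmem : Set.Icc a b ∈ nhds t₀ := Icc_mem_nhds ht₀.1 ht₀.2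
  have hfd : HasDerivAt (f x₀) (f' x₀ t₀) t₀ :=
    (hderiv x₀ t₀ ⟨ht₀.1.le, ht₀.2.le⟩).hasDerivAt hmem
  have hh : HasDerivAt (fun t => f x₀ t - g t) (f' x₀ t₀ - d) t₀ := hfd.sub hd
  have hmin : IsLocalMin (fun t => f x₀ t - g t) t₀ := by
    filter_upwards [hmem] with t ht
    have := hle t ht
    simp only [hx₀]
    linarith
  have := hmin.hasDerivAt_eq_zero hh
  linarith
end

section
/- Analytic core of Theorem 5.2 for spherical orbits: Let k > 0, C₁ ≥ 0, and C₄ ≥ 4/9. Define Ŝ := (8π/k²) · (sqrt((1+C₁)² + 2/9) − (1+C₁))^{−2} and S_lower := Ŝ · (9C₄)^{3C₄ − 4/3}. Let S : [0,∞) → (0,∞) be locally Lipschitz such that at almost every λ ≥ 0, S is differentiable and |S'(λ)/S(λ) − (2/3)k²| ≤ 8π/S(λ) + 2(1+C₁) k sqrt(8π/S(λ)) + k² C₄ e^{−k²λ/3}. If S(0) ≥ S_lower, then there exists λ₀ ∈ [0,∞) such that for all λ₁, λ₂ with λ₀ ≤ λ₁ < λ₂ one has 1/2 ≤ S(λ₂)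 / (S(λ₁) e^{(2/3)k²(λ₂−λ₁)}) ≤ 2. -/
/-!
Write `L = log S`. Since `S` is locally Lipschitz and positive, so is `L`, and the fundamental
theorem of calculus for absolutely continuous functions bounds every increment
`L λ₂ - L λ₁ - (2/3) k² (λ₂ - λ₁)` by the integral of the error term over `[λ₁, λ₂]`.

Write `b = 1 + C₁` and `ρ = √(b² + 2/9) - b`, so `ρ² + 2bρ = 2/9` and `Ŝ = 8π / (kρ)²`. As long as
`S ≥ 3Ŝ/4`, the area part `8π/S + 2bk√(8π/S)` of the error is at most `(8/27) k²`, hence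
`L' ≥ (10/27) k² - C₄ k² e^{-k²λ/3}`. Integrating, `L` never loses more than `3 C₄`, which the head
start `(3C₄ - 4/3) log (9C₄)` of `L 0` over `log Ŝ` absorbs up to a margin larger than
`log (3/4)`; so `S` never drops to `3Ŝ/4`, and therefore `S λ ≥ Ŝ e^{-3C₄} e^{(10/27) k² λ}`.
Then the whole error term is `O(e^{-(5/27) k² λ})`, whose tail integrals eventually drop below
`log 2`.
-/

open Set MeasureTheory Real Filter Topology
open scoped NNReal

theorem Real.lipschitzOnWith_log_Ici {m : ℝ} (hm : 0 < m) :
    LipschitzOnWith (Real.toNNReal m⁻¹) log (Ici m) := by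
  refine (convex_Ici m).lipschitzOnWith_of_nnnorm_deriv_le
    (fun x hx => differentiableAt_log (hm.trans_le hx).ne') fun x hx => ?_
  have hx0 : 0 < x := hm.trans_le hx
  rw [deriv_log, ← NNReal.coe_le_coe, coe_nnnorm, Real.coe_toNNReal _ (inv_nonneg.2 hm.le),
    norm_inv, Real.norm_of_nonneg hx0.le]
  exact inv_anti₀ hm hx

theorem AbsolutelyContinuousOnInterval.abs_sub_sub_mul_le_integral {f g : ℝ → ℝ} {a b c : ℝ}
    (hab : a ≤ b) (hf : AbsolutelyContinuousOnInterval f a b)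
    (hg : IntervalIntegrable g volume a b)
    (h : ∀ᵐ x ∂volume.restrict (Ioo a b), |deriv f x - c| ≤ g x) :
    |f b - f a - c * (b - a)| ≤ ∫ x in a..b, g x := by
  have hftc : f b - f a - c * (b - a) = ∫ x in a..b, (deriv f x - c : ℝ) := by
    rw [intervalIntegral.integral_sub hf.intervalIntegrable_deriv
        (intervalIntegrable_const (c := c)), hf.integral_deriv_eq_sub, intervalIntegral.integral_const, smul_eq_mul, mul_comm]
  rw [hftc, ← Real.norm_eq_abs]
  refine intervalIntegral.norm_integral_le_of_norm_le hab ?_ hg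
  rwa [← ae_restrict_iff' measurableSet_Ioc, ← Measure.restrict_congr_set Ioo_ae_eq_Ioc]

theorem abs_log_sub_log_sub_mul_le_integral {S g : ℝ → ℝ} {K : ℝ≥0} {a b c : ℝ} (hab : a ≤ b)
    (hS : LipschitzOnWith K S (Icc a b)) (hpos : ∀ x ∈ Icc a b, 0 < S x)
    (hg : IntervalIntegrable g volume a b)
    (h : ∀ᵐ x ∂volume.restrict (Ioo a b),
      DifferentiableAt ℝ S x ∧ |deriv S x / S x - c| ≤ g x) :
    |log (S b) - log (S a) - c * (b - a)| ≤ ∫ x in a..b, g x := by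
  obtain ⟨z, hz, hmin⟩ := isCompact_Icc.exists_isMinOn (nonempty_Icc.2 hab) hS.continuousOn
  have hlog : LipschitzOnWith _ (log ∘ S) (Icc a b) :=
    (Real.lipschitzOnWith_log_Ici (hpos z hz)).comp hS fun x hx => hmin hx
  refine (uIcc_of_le hab ▸ hlog).absolutelyContinuousOnInterval.abs_sub_sub_mul_le_integral
    hab hg ?_
  filter_upwards [h, ae_restrict_mem measurableSet_Ioo] with x ⟨hdiff, hx⟩ hmem
  rwa [Function.comp_def, deriv.log hdiff (hpos x (Ioo_subset_Icc_self hmem)).ne']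

theorem integral_mul_exp_neg_mul {c β : ℝ} (hβ : β ≠ 0) (a b : ℝ) :
    ∫ x in a..b, c * exp (-(β * x)) = c / β * (exp (-(β * a)) - exp (-(β * b))) := by
  have hderiv : ∀ x, HasDerivAt (fun x => -(c / β) * exp (-(β * x))) (c * exp (-(β * x))) x :=
    fun x => (((hasDerivAt_id' x).const_mul β).neg.exp.const_mul (-(c / β))).congr_deriv
      (by field_simp; rfl)
  rw [intervalIntegral.integral_eq_sub_of_hasDerivAt (fun x _ => hderiv x)
    ((by fun_prop : Continuous fun x => c * exp (-(β * x))).intervalIntegrable a b)]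
  ring

theorem exists_forall_abs_log_sub_log_sub_mul_le {S : ℝ → ℝ} {c D β ε : ℝ} (hβ : 0 < β)
    (hε : 0 < ε) (hSpos : ∀ l, 0 ≤ l → 0 < S l)
    (hSlip : ∀ x y : ℝ, 0 ≤ x → ∃ C : ℝ≥0, LipschitzOnWith C S (Icc x y))
    (h : ∀ᵐ l ∂volume.restrict (Ici 0),
      DifferentiableAt ℝ S l ∧ |deriv S l / S l - c| ≤ D * exp (-(β * l))) :
    ∃ l₀, 0 ≤ l₀ ∧ ∀ l₁ l₂, l₀ ≤ l₁ → l₁ ≤ l₂ →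
      |log (S l₂) - log (S l₁) - c * (l₂ - l₁)| ≤ ε := by
  have htail : Tendsto (fun l => |D| / β * exp (-(β * l))) atTop (𝓝 0) := by
    simpa using (tendsto_exp_neg_atTop_nhds_zero.comp
      (tendsto_id.const_mul_atTop hβ)).const_mul (|D| / β)
  obtain ⟨l₀, hl₀⟩ := eventually_atTop.1 (htail.eventually (ge_mem_nhds hε))
  refine ⟨max l₀ 0, le_max_right _ _, fun l₁ l₂ h₁ h₂ => ?_⟩
  have hl₁ : 0 ≤ l₁ := (le_max_right _ _).trans h₁
  obtain ⟨K, hK⟩ := hSlip l₁ l₂ hl₁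
  have hdecay : exp (-(β * l₂)) ≤ exp (-(β * l₁)) := by gcongr
  calc |log (S l₂) - log (S l₁) - c * (l₂ - l₁)| ≤ ∫ l in l₁..l₂, D * exp (-(β * l)) :=
        abs_log_sub_log_sub_mul_le_integral h₂ hK (fun x hx => hSpos x (hl₁.trans hx.1))
          ((by fun_prop : Continuous fun l => D * exp (-(β * l))).intervalIntegrable _ _)
          (ae_restrict_of_ae_restrict_of_subset (fun x hx => hl₁.trans hx.1.le) h)
    _ = D / β * (exp (-(β * l₁)) - exp (-(β * l₂))) := integral_mul_exp_neg_mul hβ.ne' _ _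
    _ ≤ |D| / β * exp (-(β * l₁)) := by
        gcongr
        · exact le_abs_self D
        · exact sub_le_self _ (exp_pos _).le
    _ ≤ ε := hl₀ l₁ ((le_max_left _ _).trans h₁)

theorem ContinuousOn.lt_of_forall_le_on_Ico_imp_lt {f : ℝ → ℝ} {a T θ : ℝ}
    (hf : ContinuousOn f (Icc a T))
    (h : ∀ t ∈ Icc a T, (∀ l ∈ Ico a t, θ ≤ f l) → θ < f t) : ∀ t ∈ Icc a T, θ < f t := by
  set B := Icc a T ∩ f ⁻¹' Iic θ
  suffices B = ∅ from fun t ht => not_le.1 fun hft => (this ▸ ⟨ht, hft⟩ : t ∈ (∅ : Set ℝ))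
  by_contra! hB
  have hbdd : BddBelow B := ⟨a, fun x hx => hx.1.1⟩
  have hmin : sInf B ∈ B :=
    (hf.preimage_isClosed_of_isClosed isClosed_Icc isClosed_Iic).csInf_mem hB hbdd
  refine (h _ hmin.1 fun l hl => ?_).not_ge hmin.2
  by_contra! hl'
  exact (csInf_le hbdd ⟨⟨hl.1, hl.2.le.trans hmin.1.2⟩, hl'.le⟩).not_gt hl.2

theorem log_three_div_four_lt {u x : ℝ} (hu : 4 / 3 ≤ u) :
    log (3 / 4) < (u - 4 / 3) * log (3 * u) + 10 / 9 * x - u * (1 - exp (-x)) := by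
  have hu0 : 0 < u := by linarith
  -- tangent line of `exp` at `log (9 u / 10) - x`, the minimiser in `x`
  have htangent : 10 / 9 * (log (9 * u / 10) - x + 1) ≤ u * exp (-x) := by
    have := add_one_le_exp (log (9 * u / 10) - x)
    rw [exp_sub, exp_log (by positivity), div_eq_mul_inv _ (exp x), ← exp_neg] at this
    linarith
  have hlog4 : 1 ≤ log (3 * u) := by
    have h4 : log 4 ≤ log (3 * u) := log_le_log (by norm_num) (by linarith)
    have : log 4 = 2 * log 2 := by
      rw [show (4 : ℝ) = 2 ^ 2 by norm_num, log_pow]; norm_num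
    linarith [log_two_gt_d9]
  have hlog65 : 1 / 6 ≤ log (9 * u / 10) := by
    have h65 := one_sub_inv_le_log_of_pos (show (0 : ℝ) < 6 / 5 by norm_num)
    have : log (6 / 5) ≤ log (9 * u / 10) := log_le_log (by norm_num) (by linarith)
    norm_num at h65; linarith
  have hlog34 : log (3 / 4) ≤ -1 / 4 := by
    have := log_le_sub_one_of_pos (show (0 : ℝ) < 3 / 4 by norm_num); linarith
  have := mul_le_mul_of_nonneg_left hlog4 (sub_nonneg.2 hu)
  linarith

theorem one_div_two_le_div_mul_exp_and_le_two {p q y : ℝ} (hp : 0 < p) (hq : 0 < q)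
    (h : |log p - log q - y| ≤ log 2) : 1 / 2 ≤ p / (q * exp y) ∧ p / (q * exp y) ≤ 2 := by
  have hexp : p / (q * exp y) = exp (log p - log q - y) := by
    rw [exp_sub, exp_sub, exp_log hp, exp_log hq, div_div]
  obtain ⟨hlower, hupper⟩ := abs_le.1 h
  rw [hexp]
  constructor
  · calc 1 / 2 = exp (-log 2) := by rw [exp_neg, exp_log two_pos, one_div]
      _ ≤ _ := exp_le_exp.2 hlower
  · calc exp (log p - log q - y) ≤ exp (log 2) := exp_le_exp.2 hupper
      _ = 2 := exp_log two_pos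

/-- The threshold `Ŝ` of the paper, with `b = 1 + C₁`. -/
noncomputable def sphereAreaThreshold (b k : ℝ) : ℝ := 8 * π / k ^ 2 / (√(b ^ 2 + 2 / 9) - b) ^ 2

noncomputable def areaError (b k s : ℝ) : ℝ := 8 * π / s + 2 * b * k * √(8 * π / s)

theorem exists_sphereAreaThreshold_eq_div_sq {b : ℝ} (hb : 0 ≤ b) (k : ℝ) :
    ∃ ρ > 0, ρ ^ 2 + 2 * b * ρ = 2 / 9 ∧ sphereAreaThreshold b k = 8 * π / (k * ρ) ^ 2 := by
  have hsq := sq_sqrt (show 0 ≤ b ^ 2 + 2 / 9 by positivity)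
  refine ⟨√(b ^ 2 + 2 / 9) - b, sub_pos.2 ((lt_sqrt hb).2 (by linarith)),
    by linear_combination hsq, ?_⟩
  rw [sphereAreaThreshold, mul_pow, div_div]

theorem sphereAreaThreshold_pos {b k : ℝ} (hb : 0 ≤ b) (hk : k ≠ 0) :
    0 < sphereAreaThreshold b k := by
  obtain ⟨ρ, hρ, -, hŜ⟩ := exists_sphereAreaThreshold_eq_div_sq hb k
  rw [hŜ]; positivity

theorem areaError_le_of_three_div_four_mul_le {b k s : ℝ} (hb : 0 ≤ b) (hk : 0 < k)
    (hs : 3 / 4 * sphereAreaThreshold b k ≤ s) : areaError b k s ≤ 8 / 27 * k ^ 2 := by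
  obtain ⟨ρ, hρ, hroot, hŜ⟩ := exists_sphereAreaThreshold_eq_div_sq hb k
  rw [hŜ] at hs
  have hquot : 8 * π / s ≤ 4 / 3 * (k * ρ) ^ 2 := by
    calc 8 * π / s ≤ 8 * π / (3 / 4 * (8 * π / (k * ρ) ^ 2)) := by gcongr
      _ = 4 / 3 * (k * ρ) ^ 2 := by field_simp
  have hsqrt : √(8 * π / s) ≤ 4 / 3 * (k * ρ) :=
    calc √(8 * π / s) ≤ √(4 / 3) * (k * ρ) := by
          rw [← sqrt_sq (by positivity : 0 ≤ k * ρ), ← sqrt_mul (by norm_num)]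
          exact sqrt_le_sqrt hquot
      _ ≤ 4 / 3 * (k * ρ) := by
          gcongr
          rw [sqrt_le_left (by norm_num)]; norm_num
  calc areaError b k s ≤ 4 / 3 * (k * ρ) ^ 2 + 2 * b * k * (4 / 3 * (k * ρ)) := by
        unfold areaError; gcongr
    _ = 8 / 27 * k ^ 2 := by linear_combination 4 / 3 * k ^ 2 * hroot

theorem areaError_le_mul_exp_neg {b k m s x : ℝ} (hb : 0 ≤ b) (hk : 0 ≤ k) (hm : 0 < m)
    (hx : 0 ≤ x) (hs : m * exp x ≤ s) : areaError b k s ≤ areaError b k m * exp (-(x / 2)) := by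
  have hquot : 8 * π / s ≤ 8 * π / m * exp (-x) := by
    calc 8 * π / s ≤ 8 * π / (m * exp x) := by gcongr
      _ = 8 * π / m * exp (-x) := by rw [exp_neg]; field_simp
  have hsqrt : √(8 * π / s) ≤ √(8 * π / m) * exp (-(x / 2)) := by
    calc √(8 * π / s) ≤ √(8 * π / m * exp (-x)) := sqrt_le_sqrt hquot
      _ = √(8 * π / m) * exp (-(x / 2)) := by
        rw [sqrt_mul (by positivity), ← exp_half]; ring_nf
  have hexp : exp (-x) ≤ exp (-(x / 2)) := exp_le_exp.2 (by linarith)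
  calc areaError b k s
        ≤ 8 * π / m * exp (-(x / 2)) + 2 * b * k * (√(8 * π / m) * exp (-(x / 2))) := by
        unfold areaError; gcongr; exact hquot.trans (by gcongr)
    _ = areaError b k m * exp (-(x / 2)) := by unfold areaError; ring

section SphereAreaGrowth

variable {b k C₄ : ℝ} {S : ℝ → ℝ}

theorem sub_le_log_sub_log_of_three_div_four_mul_le (hk : 0 < k) (hb : 0 ≤ b)
    (hSpos : ∀ l, 0 ≤ l → 0 < S l)
    (hSlip : ∀ x y : ℝ, 0 ≤ x → ∃ C : ℝ≥0, LipschitzOnWith C S (Icc x y))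
    (hae : ∀ᵐ l ∂volume.restrict (Ici 0), DifferentiableAt ℝ S l ∧
      |deriv S l / S l - 2 / 3 * k ^ 2| ≤ areaError b k (S l) + k ^ 2 * C₄ * exp (-(k ^ 2 * l) / 3))
    {t : ℝ} (ht : 0 ≤ t) (hthr : ∀ l ∈ Ico 0 t, 3 / 4 * sphereAreaThreshold b k ≤ S l) :
    10 / 27 * k ^ 2 * t - 3 * C₄ * (1 - exp (-(k ^ 2 / 3 * t))) ≤ log (S t) - log (S 0) := by
  have hexp : ∀ l : ℝ, exp (-(k ^ 2 * l) / 3) = exp (-(k ^ 2 / 3 * l)) := fun l => by congr 1; ring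
  obtain ⟨K, hK⟩ := hSlip 0 t le_rfl
  have hbound := abs_log_sub_log_sub_mul_le_integral ht hK (fun x hx => hSpos x hx.1)
    (g := fun l => 8 / 27 * k ^ 2 + k ^ 2 * C₄ * exp (-(k ^ 2 / 3 * l)))
    ((by fun_prop : Continuous _).intervalIntegrable _ _) (by
      filter_upwards [ae_restrict_of_ae_restrict_of_subset
          (Ioo_subset_Icc_self.trans Icc_subset_Ici_self) hae, ae_restrict_mem measurableSet_Ioo] with l ⟨hdiff, hl⟩ hmem
      refine ⟨hdiff, hl.trans ?_⟩
      rw [hexp]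
      gcongr
      exact areaError_le_of_three_div_four_mul_le hb hk (hthr l ⟨hmem.1.le, hmem.2⟩))
  rw [intervalIntegral.integral_add intervalIntegrable_const
      ((by fun_prop : Continuous _).intervalIntegrable _ _), intervalIntegral.integral_const,
    integral_mul_exp_neg_mul (by positivity), smul_eq_mul] at hbound
  rw [show k ^ 2 * C₄ / (k ^ 2 / 3) = 3 * C₄ by field_simp, mul_zero, neg_zero, exp_zero,
    sub_zero] at hbound
  linarith [(abs_le.1 hbound).1]

theorem sphereAreaThreshold_mul_exp_le (hk : 0 < k) (hb : 0 ≤ b) (hC₄ : 4 / 9 ≤ C₄)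
    (hSpos : ∀ l, 0 ≤ l → 0 < S l)
    (hSlip : ∀ x y : ℝ, 0 ≤ x → ∃ C : ℝ≥0, LipschitzOnWith C S (Icc x y))
    (hae : ∀ᵐ l ∂volume.restrict (Ici 0), DifferentiableAt ℝ S l ∧
      |deriv S l / S l - 2 / 3 * k ^ 2| ≤ areaError b k (S l) + k ^ 2 * C₄ * exp (-(k ^ 2 * l) / 3))
    (h0 : sphereAreaThreshold b k * (9 * C₄) ^ (3 * C₄ - 4 / 3 : ℝ) ≤ S 0) {l : ℝ} (hl : 0 ≤ l) :
    sphereAreaThreshold b k * exp (-(3 * C₄)) * exp (10 / 27 * k ^ 2 * l) ≤ S l := by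
  set Ŝ := sphereAreaThreshold b k
  have hŜ : 0 < Ŝ := sphereAreaThreshold_pos hb hk.ne'
  have hlog0 : log Ŝ + (3 * C₄ - 4 / 3) * log (9 * C₄) ≤ log (S 0) := by
    rw [← log_rpow (by linarith), ← log_mul hŜ.ne' (by positivity)]
    exact log_le_log (by positivity) h0
  have hgain : 0 ≤ (3 * C₄ - 4 / 3) * log (9 * C₄) :=
    mul_nonneg (by linarith) (log_nonneg (by linarith))
  -- `S` can never fall to `3 Ŝ / 4`: at a first such time `log S` would already have gained more
  -- than `log (3 / 4)` over `log Ŝ`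
  have hbarrier : ∀ t, 0 ≤ t → 3 / 4 * Ŝ ≤ S t := by
    intro T hT
    obtain ⟨K, hK⟩ := hSlip 0 T le_rfl
    refine (hK.continuousOn.lt_of_forall_le_on_Ico_imp_lt (fun t ht hthr => ?_) T ⟨hT, le_rfl⟩).le
    have hgrowth := sub_le_log_sub_log_of_three_div_four_mul_le hk hb hSpos hSlip hae ht.1 hthr
    have hmargin := log_three_div_four_lt (u := 3 * C₄) (x := k ^ 2 / 3 * t) (by linarith)
    rw [show 3 * (3 * C₄) = 9 * C₄ by ring] at hmargin
    rw [← log_lt_log_iff (by positivity) (hSpos t ht.1), log_mul (by norm_num) hŜ.ne']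
    linarith
  have hgrowth := sub_le_log_sub_log_of_three_div_four_mul_le hk hb hSpos hSlip hae hl
    fun t ht => hbarrier t ht.1
  rw [← log_le_log_iff (by positivity) (hSpos l hl), log_mul (by positivity) (by positivity),
    log_mul hŜ.ne' (by positivity), log_exp, log_exp]
  have hloss := mul_nonneg (by linarith : 0 ≤ C₄) (exp_pos (-(k ^ 2 / 3 * l))).le
  linarith

theorem ae_abs_log_deriv_sub_le_mul_exp (hk : 0 < k) (hb : 0 ≤ b) (hC₄ : 4 / 9 ≤ C₄)
    (hSpos : ∀ l, 0 ≤ l → 0 < S l)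
    (hSlip : ∀ x y : ℝ, 0 ≤ x → ∃ C : ℝ≥0, LipschitzOnWith C S (Icc x y))
    (hae : ∀ᵐ l ∂volume.restrict (Ici 0), DifferentiableAt ℝ S l ∧
      |deriv S l / S l - 2 / 3 * k ^ 2| ≤ areaError b k (S l) + k ^ 2 * C₄ * exp (-(k ^ 2 * l) / 3))
    (h0 : sphereAreaThreshold b k * (9 * C₄) ^ (3 * C₄ - 4 / 3 : ℝ) ≤ S 0) :
    ∀ᵐ l ∂volume.restrict (Ici 0), DifferentiableAt ℝ S l ∧
      |deriv S l / S l - 2 / 3 * k ^ 2| ≤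
        (areaError b k (sphereAreaThreshold b k * exp (-(3 * C₄))) + k ^ 2 * C₄) *
          exp (-(5 / 27 * k ^ 2 * l)) := by
  filter_upwards [hae, ae_restrict_mem measurableSet_Ici] with l ⟨hdiff, hbound⟩ (hl : 0 ≤ l)
  refine ⟨hdiff, hbound.trans ?_⟩
  have harea := areaError_le_mul_exp_neg hb hk.le
    (mul_pos (sphereAreaThreshold_pos hb hk.ne') (exp_pos _)) (by positivity)
    (sphereAreaThreshold_mul_exp_le hk hb hC₄ hSpos hSlip hae h0 hl)
  have hdecay : exp (-(k ^ 2 * l) / 3) ≤ exp (-(5 / 27 * k ^ 2 * l)) :=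
    exp_le_exp.2 (by linarith [mul_nonneg (sq_nonneg k) hl])
  rw [show 10 / 27 * k ^ 2 * l / 2 = 5 / 27 * k ^ 2 * l by ring] at harea
  have := mul_le_mul_of_nonneg_left hdecay (by positivity : 0 ≤ k ^ 2 * C₄)
  linarith

end SphereAreaGrowth

/-- Analytic core of Theorem 5.2 for spherical orbits: if the minimal orbit area
`S : [0,∞) → (0,∞)` is locally Lipschitz, a.e. satisfies
`|S'/S − (2/3)k²| ≤ 8π/S + 2(1+C₁)k √(8π/S) + k² C₄ e^{−k²λ/3}`, and starts above
the threshold `S_lower = Ŝ (9C₄)^{3C₄ − 4/3}` with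
`Ŝ = (8π/k²)(√((1+C₁)² + 2/9) − (1+C₁))⁻²`, then eventually `S` grows like
`e^{(2/3)k²λ}` up to a factor 2. -/
theorem minimal_area_growth_sphere
    (k C₁ C₄ : ℝ) (hk : 0 < k) (hC₁ : 0 ≤ C₁) (hC₄ : 4/9 ≤ C₄)
    (Shat Slower : ℝ)
    (hShat : Shat = (8 * Real.pi / k^2) /
      (Real.sqrt ((1 + C₁)^2 + 2/9) - (1 + C₁))^2)
    (hSlower : Slower = Shat * (9 * C₄) ^ (3 * C₄ - 4/3 : ℝ))
    (S : ℝ → ℝ)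
    (hSpos : ∀ l, 0 ≤ l → 0 < S l)
    (hSlip : ∀ x y : ℝ, 0 ≤ x → ∃ C : NNReal, LipschitzOnWith C S (Set.Icc x y))
    (hae : ∀ᵐ l ∂(volume.restrict (Set.Ici (0 : ℝ))),
      DifferentiableAt ℝ S l ∧
        |deriv S l / S l - (2/3) * k^2| ≤
          8 * Real.pi / S l + 2 * (1 + C₁) * k * Real.sqrt (8 * Real.pi / S l)
            + k^2 * C₄ * Real.exp (-(k^2 * l) / 3))
    (h0 : Slower ≤ S 0) :
    ∃ l₀ : ℝ, 0 ≤ l₀ ∧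
      ∀ l₁ l₂ : ℝ, l₀ ≤ l₁ → l₁ < l₂ →
        1/2 ≤ S l₂ / (S l₁ * Real.exp ((2/3) * k^2 * (l₂ - l₁))) ∧
        S l₂ / (S l₁ * Real.exp ((2/3) * k^2 * (l₂ - l₁))) ≤ 2 := by
  subst hShat hSlower
  obtain ⟨l₀, hl₀, hclose⟩ := exists_forall_abs_log_sub_log_sub_mul_le (by positivity)
    (log_pos one_lt_two) hSpos hSlip
    (ae_abs_log_deriv_sub_le_mul_exp hk (by linarith) hC₄ hSpos hSlip hae h0)
  exact ⟨l₀, hl₀, fun l₁ l₂ h₁ h₂ => one_div_two_le_div_mul_exp_and_le_two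
    (hSpos l₂ (hl₀.trans (h₁.trans h₂.le))) (hSpos l₁ (hl₀.trans h₁)) (hclose l₁ l₂ h₁ h₂.le)⟩
end

section
/- Analytic core of Lemma 6.3 (growth of the L² distance E): Let K > 0, C₂ ≥ 0, C₉ > 0 and λ₀ ≥ 0. Set C'₁₀ := (3/2)C₂ + (1/2)C₉ and C₁₀ := C₉ e^{3C'₁₀} / (2C'₁₀). Let E : [λ₀,∞) → [0,∞) be locally Lipschitz with E(λ₀) = 0 such that at almost every λ ≥ λ₀ at which E is differentiable, E'(λ) ≤ K² (1 + (3/2) C₂ e^{−(2/3)K²λ}) E(λ) + C₉ K^{1/2} e^{K²λ/6} sqrt(E(λ)). Then for all λ ≥ λ₀: E(λ) ≤ (C₁₀ / K³) e^{−(2/3)K²λ₀} e^{K²λ}. -/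
/-!
With `α = growthRate` and `β = forcing`, `u = √E` formally satisfies the linear inequality
`2u' ≤ αu + β`. To avoid differentiating `√E` where `E` vanishes, compare `E` instead with `ψ²`
for a positive strict supersolution `ψ` (`αψ + β < 2ψ'`): `E` lies below the `C¹` function
`E(l₀) + ∫ (αE + β√E)`, which cannot cross `ψ²` by the fencing theorem for right derivatives.
Explicit barriers `ψ = barrier … δ` exist for every `δ > 0`; letting `δ → 0` gives the bound,
and `x² ≤ eˣ` lets `C₁₀` absorb the factor `e^{(9/4)C₂}`.
-/

open Set MeasureTheory Filter Topology Real

theorem AbsolutelyContinuousOnInterval.sub_le_integral_of_ae_deriv_le {f φ : ℝ → ℝ} {a b : ℝ}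
    (hab : a ≤ b) (hf : AbsolutelyContinuousOnInterval f a b)
    (hφ : IntervalIntegrable φ volume a b)
    (hderiv : ∀ᵐ t ∂volume.restrict (Icc a b), DifferentiableAt ℝ f t → deriv f t ≤ φ t) :
    f b - f a ≤ ∫ t in a..b, φ t := by
  rw [← hf.integral_deriv_eq_sub]
  refine intervalIntegral.integral_mono_ae_restrict hab hf.intervalIntegrable_deriv hφ ?_
  have hdiff : ∀ᵐ t ∂volume.restrict (Icc a b), DifferentiableAt ℝ f t := by
    rw [ae_restrict_iff' measurableSet_Icc, ← uIcc_of_le hab]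
    exact hf.ae_differentiableAt
  filter_upwards [hdiff, hderiv] with t hdiff_t hderiv_t using hderiv_t hdiff_t

theorem AbsolutelyContinuousOnInterval.le_sq_of_ae_deriv_le {E α β ψ ψ' : ℝ → ℝ} {a b : ℝ}
    (hab : a ≤ b) (hE : AbsolutelyContinuousOnInterval E a b)
    (hα : ContinuousOn α (Icc a b)) (hβ : ContinuousOn β (Icc a b))
    (hα0 : ∀ t ∈ Icc a b, 0 ≤ α t) (hβ0 : ∀ t ∈ Icc a b, 0 ≤ β t)
    (hderiv : ∀ᵐ t ∂volume.restrict (Icc a b),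
      DifferentiableAt ℝ E t → deriv E t ≤ α t * E t + β t * √(E t))
    (hψ : ∀ t ∈ Icc a b, HasDerivAt ψ (ψ' t) t) (hψ0 : ∀ t ∈ Icc a b, 0 < ψ t)
    (hsuper : ∀ t ∈ Icc a b, α t * ψ t + β t < 2 * ψ' t) (ha : E a ≤ ψ a ^ 2) :
    E b ≤ ψ b ^ 2 := by
  set Φ := fun s => α s * E s + β s * √(E s)
  have hEc : ContinuousOn E (Icc a b) := uIcc_of_le hab ▸ hE.continuousOn
  have hΦ : ContinuousOn Φ (Icc a b) := (hα.mul hEc).add (hβ.mul hEc.sqrt)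
  set F := fun t => E a + ∫ s in a..t, Φ s
  have hEF : ∀ t ∈ Icc a b, E t ≤ F t := fun t ht => by
    have hsub : Icc a t ⊆ Icc a b := Icc_subset_Icc_right ht.2
    have := (hE.mono (uIcc_subset_uIcc left_mem_uIcc (Icc_subset_uIcc ht))
      ).sub_le_integral_of_ae_deriv_le ht.1 ((hΦ.mono hsub).intervalIntegrable_of_Icc ht.1)
      (ae_restrict_of_ae_restrict_of_subset hsub hderiv)
    simp only [F]; linarith
  have hFc : ContinuousOn F (Icc a b) := by
    have := intervalIntegral.continuousOn_primitive_interval'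
      (hΦ.intervalIntegrable_of_Icc (μ := volume) hab) (left_mem_uIcc (a := a) (b := b))
    rw [uIcc_of_le hab] at this
    exact continuousOn_const.add this
  have hF' : ∀ x ∈ Ico a b, HasDerivWithinAt F (Φ x) (Ici x) x := by
    intro x hx
    have hnhds : Icc a b ∈ 𝓝[>] x := Icc_mem_nhdsGT_of_mem hx
    refine (intervalIntegral.integral_hasDerivWithinAt_right (t := Ioi x) ?_ ?_ ?_).const_add (E a)
    · exact (hΦ.mono (Icc_subset_Icc_right hx.2.le)).intervalIntegrable_of_Icc hx.1
    · exact (hΦ.stronglyMeasurableAtFilter_nhdsWithin measurableSet_Icc x).filter_mono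
        (nhdsWithin_le_of_mem hnhds)
    · exact (hΦ x (Ico_subset_Icc_self hx)).mono_of_mem_nhdsWithin hnhds
  have hψsq : ∀ x ∈ Icc a b, HasDerivAt (fun t => ψ t ^ 2) (2 * ψ x * ψ' x) x := fun x hx =>
    ((hψ x hx).pow 2).congr_deriv (by ring)
  have hbound : ∀ x ∈ Ico a b, F x = ψ x ^ 2 → Φ x < 2 * ψ x * ψ' x := by
    intro x hx hFx
    have hx' := Ico_subset_Icc_self hx
    have hEx : E x ≤ ψ x ^ 2 := hFx ▸ hEF x hx'
    have hsqrt : √(E x) ≤ ψ x :=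
      (Real.sqrt_le_sqrt hEx).trans_eq (Real.sqrt_sq (hψ0 x hx').le)
    calc Φ x ≤ α x * ψ x ^ 2 + β x * ψ x := by
          have := hα0 x hx'; have := hβ0 x hx'; simp only [Φ]; gcongr
      _ = ψ x * (α x * ψ x + β x) := by ring
      _ < ψ x * (2 * ψ' x) := mul_lt_mul_of_pos_left (hsuper x hx') (hψ0 x hx')
      _ = 2 * ψ x * ψ' x := by ring
  have hFψ := image_le_of_deriv_right_lt_deriv_boundary' hFc hF' (by simpa [F] using ha)
    (fun x hx => (hψsq x hx).continuousAt.continuousWithinAt)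
    (fun x hx => (hψsq x (Ico_subset_Icc_self hx)).hasDerivWithinAt) hbound
  exact (hEF b (right_mem_Icc.2 hab)).trans (hFψ (right_mem_Icc.2 hab))

noncomputable section

def growthRate (K C₂ t : ℝ) : ℝ := K ^ 2 * (1 + (3 / 2) * C₂ * exp (-(2 / 3) * K ^ 2 * t))

def forcing (K C₉ t : ℝ) : ℝ := C₉ * √K * exp (K ^ 2 * t / 6)

def growthExponent (K C₂ l₀ t : ℝ) : ℝ :=
  K ^ 2 * (t - l₀) + (9 / 4) * C₂ * (exp (-(2 / 3) * K ^ 2 * l₀) - exp (-(2 / 3) * K ^ 2 * t))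

def barrierCoeff (K C₉ l₀ : ℝ) : ℝ := 3 * C₉ * √K * exp (K ^ 2 * l₀ / 6) / (2 * K ^ 2)

/-- Replacing `growthExponent` by its lower bound `K²(t - l₀)` in the Duhamel formula for
`2u' = growthRate * u + forcing`, `u(l₀) = 0`, gives `barrier … 0`; raising the initial value and
the coefficient by `δ` makes the barrier positive and a strict supersolution. -/
def barrier (K C₂ C₉ l₀ δ t : ℝ) : ℝ :=
  exp (growthExponent K C₂ l₀ t / 2) *
    (δ + (barrierCoeff K C₉ l₀ + δ) * (1 - exp (-(K ^ 2 / 3) * (t - l₀))))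

def barrierDeriv (K C₂ C₉ l₀ δ t : ℝ) : ℝ :=
  growthRate K C₂ t / 2 * barrier K C₂ C₉ l₀ δ t +
    exp (growthExponent K C₂ l₀ t / 2) *
      ((barrierCoeff K C₉ l₀ + δ) * (K ^ 2 / 3) * exp (-(K ^ 2 / 3) * (t - l₀)))

variable {K C₂ C₉ l₀ t : ℝ}

theorem continuous_growthRate (K C₂ : ℝ) : Continuous (growthRate K C₂) := by
  unfold growthRate; fun_prop

theorem continuous_forcing (K C₉ : ℝ) : Continuous (forcing K C₉) := by
  unfold forcing; fun_prop

theorem growthRate_nonneg (hC₂ : 0 ≤ C₂) : 0 ≤ growthRate K C₂ t := by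
  unfold growthRate; positivity

theorem forcing_nonneg (hC₉ : 0 ≤ C₉) : 0 ≤ forcing K C₉ t := by
  unfold forcing; positivity

theorem hasDerivAt_growthExponent (K C₂ l₀ t : ℝ) :
    HasDerivAt (growthExponent K C₂ l₀) (growthRate K C₂ t) t := by
  have hexp := ((hasDerivAt_id t).const_mul (-(2 / 3) * K ^ 2)).exp
  have := (((hasDerivAt_id t).sub_const l₀).const_mul (K ^ 2)).add
    ((hexp.const_sub (exp (-(2 / 3) * K ^ 2 * l₀))).const_mul ((9 / 4) * C₂))
  exact this.congr_deriv (by simp only [growthRate, id]; ring)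

theorem hasDerivAt_barrier (K C₂ C₉ l₀ δ t : ℝ) :
    HasDerivAt (barrier K C₂ C₉ l₀ δ) (barrierDeriv K C₂ C₉ l₀ δ t) t := by
  have hdecay := (((hasDerivAt_id t).sub_const l₀).const_mul (-(K ^ 2 / 3))).exp
  have := ((hasDerivAt_growthExponent K C₂ l₀ t).div_const 2).exp.mul
    (((hdecay.const_sub 1).const_mul (barrierCoeff K C₉ l₀ + δ)).const_add δ)
  exact this.congr_deriv (by simp only [barrierDeriv, barrier, id]; ring)

theorem continuous_barrier_delta (K C₂ C₉ l₀ t : ℝ) :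
    Continuous fun δ => barrier K C₂ C₉ l₀ δ t := by
  unfold barrier; fun_prop

theorem barrier_initial (K C₂ C₉ l₀ δ : ℝ) : barrier K C₂ C₉ l₀ δ l₀ = δ := by
  simp [barrier, growthExponent]

theorem mul_sub_le_growthExponent (hC₂ : 0 ≤ C₂) (ht : l₀ ≤ t) :
    K ^ 2 * (t - l₀) ≤ growthExponent K C₂ l₀ t := by
  have : exp (-(2 / 3) * K ^ 2 * t) ≤ exp (-(2 / 3) * K ^ 2 * l₀) :=
    exp_le_exp.2 (by nlinarith [mul_nonneg (sq_nonneg K) (sub_nonneg.2 ht)])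
  unfold growthExponent
  nlinarith

theorem growthExponent_le (hC₂ : 0 ≤ C₂) (hl₀ : 0 ≤ l₀) :
    growthExponent K C₂ l₀ t ≤ K ^ 2 * (t - l₀) + (9 / 4) * C₂ := by
  have : exp (-(2 / 3) * K ^ 2 * l₀) ≤ 1 := exp_le_one_iff.2 (by nlinarith [sq_nonneg K])
  unfold growthExponent
  nlinarith [exp_pos (-(2 / 3) * K ^ 2 * t)]

theorem barrierCoeff_nonneg (hC₉ : 0 ≤ C₉) : 0 ≤ barrierCoeff K C₉ l₀ := by
  unfold barrierCoeff; positivity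

theorem one_sub_exp_mem_Icc_of_nonpos {x : ℝ} (hx : x ≤ 0) : 1 - exp x ∈ Icc 0 1 :=
  ⟨sub_nonneg.2 (exp_le_one_iff.2 hx), sub_le_self 1 (exp_pos x).le⟩

theorem neg_sq_div_three_mul_sub_nonpos (K : ℝ) (ht : l₀ ≤ t) : -(K ^ 2 / 3) * (t - l₀) ≤ 0 := by
  nlinarith [mul_nonneg (sq_nonneg K) (sub_nonneg.2 ht)]

theorem barrier_pos (hC₉ : 0 ≤ C₉) {δ : ℝ} (hδ : 0 < δ) (ht : l₀ ≤ t) :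
    0 < barrier K C₂ C₉ l₀ δ t := by
  have hw := one_sub_exp_mem_Icc_of_nonpos (neg_sq_div_three_mul_sub_nonpos K ht)
  have hc := barrierCoeff_nonneg (K := K) (l₀ := l₀) hC₉
  unfold barrier
  have : 0 ≤ (barrierCoeff K C₉ l₀ + δ) * (1 - exp (-(K ^ 2 / 3) * (t - l₀))) :=
    mul_nonneg (by linarith) hw.1
  positivity

theorem forcing_le (hK : 0 < K) (hC₂ : 0 ≤ C₂) (hC₉ : 0 ≤ C₉) (ht : l₀ ≤ t) :
    forcing K C₉ t ≤ 2 * exp (growthExponent K C₂ l₀ t / 2) * barrierCoeff K C₉ l₀ *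
      (K ^ 2 / 3) * exp (-(K ^ 2 / 3) * (t - l₀)) := by
  have hcoeff : 2 * barrierCoeff K C₉ l₀ * (K ^ 2 / 3) = C₉ * √K * exp (K ^ 2 * l₀ / 6) := by
    unfold barrierCoeff; field_simp
  have hG := mul_sub_le_growthExponent (K := K) hC₂ ht
  calc forcing K C₉ t
      ≤ C₉ * √K *
          exp (K ^ 2 * l₀ / 6 + growthExponent K C₂ l₀ t / 2 + -(K ^ 2 / 3) * (t - l₀)) := by
        unfold forcing; gcongr; linarith
    _ = _ := by
        rw [exp_add, exp_add]
        linear_combination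
          (-(exp (growthExponent K C₂ l₀ t / 2) * exp (-(K ^ 2 / 3) * (t - l₀)))) * hcoeff

theorem growthRate_mul_barrier_add_forcing_lt (hK : 0 < K) (hC₂ : 0 ≤ C₂) (hC₉ : 0 ≤ C₉)
    {δ : ℝ} (hδ : 0 < δ) (ht : l₀ ≤ t) :
    growthRate K C₂ t * barrier K C₂ C₉ l₀ δ t + forcing K C₉ t <
      2 * barrierDeriv K C₂ C₉ l₀ δ t := by
  have hpos : 0 < exp (growthExponent K C₂ l₀ t / 2) * (K ^ 2 / 3) *
      exp (-(K ^ 2 / 3) * (t - l₀)) := by positivity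
  have := forcing_le hK hC₂ hC₉ ht
  unfold barrierDeriv
  nlinarith [mul_pos hδ hpos]

theorem barrier_zero_sq_le (hK : 0 < K) (hC₂ : 0 ≤ C₂) (hl₀ : 0 ≤ l₀) (ht : l₀ ≤ t) :
    barrier K C₂ C₉ l₀ 0 t ^ 2 ≤
      9 / 4 * C₉ ^ 2 * exp (9 / 4 * C₂) / K ^ 3 * exp (-(2 / 3) * K ^ 2 * l₀) *
        exp (K ^ 2 * t) := by
  have hw := one_sub_exp_mem_Icc_of_nonpos (neg_sq_div_three_mul_sub_nonpos K ht)
  calc barrier K C₂ C₉ l₀ 0 t ^ 2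
      = exp (growthExponent K C₂ l₀ t) * barrierCoeff K C₉ l₀ ^ 2 *
          (1 - exp (-(K ^ 2 / 3) * (t - l₀))) ^ 2 := by
        rw [barrier, zero_add, add_zero, mul_pow, mul_pow, sq (exp _), ← exp_add, add_halves,
          mul_assoc]
    _ ≤ exp (K ^ 2 * (t - l₀) + 9 / 4 * C₂) * barrierCoeff K C₉ l₀ ^ 2 * 1 := by
        gcongr
        · exact growthExponent_le hC₂ hl₀
        · exact pow_le_one₀ hw.1 hw.2
    _ = _ := by
        have hexp : exp (K ^ 2 * (t - l₀) + 9 / 4 * C₂) * exp (K ^ 2 * l₀ / 6) ^ 2 =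
            exp (9 / 4 * C₂) * exp (-(2 / 3) * K ^ 2 * l₀) * exp (K ^ 2 * t) := by
          simp only [sq, ← exp_add]; ring_nf
        have hcoeff :
            barrierCoeff K C₉ l₀ ^ 2 = 9 / 4 * C₉ ^ 2 / K ^ 3 * exp (K ^ 2 * l₀ / 6) ^ 2 := by
          unfold barrierCoeff
          generalize exp (K ^ 2 * l₀ / 6) = e
          rw [div_pow, mul_pow, mul_pow, mul_pow, sq_sqrt hK.le]
          field_simp
          ring
        rw [hcoeff]
        linear_combination (9 / 4 * C₉ ^ 2 / K ^ 3) * hexp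

theorem sq_le_exp_of_nonneg {x : ℝ} (hx : 0 ≤ x) : x ^ 2 ≤ exp x := by
  have := sum_le_exp_of_nonneg hx 4
  simp only [Finset.sum_range_succ, Finset.sum_range_zero, Nat.factorial] at this
  norm_num at this
  nlinarith [mul_nonneg hx (sq_nonneg (x - 3 / 2))]

theorem mul_sq_exp_le (hC₂ : 0 ≤ C₂) (hC₉ : 0 < C₉) :
    9 / 4 * C₉ ^ 2 * exp (9 / 4 * C₂) ≤
      C₉ * exp (3 * ((3 / 2) * C₂ + (1 / 2) * C₉)) / (2 * ((3 / 2) * C₂ + (1 / 2) * C₉)) := by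
  rw [le_div_iff₀ (by positivity)]
  calc 9 / 4 * C₉ ^ 2 * exp (9 / 4 * C₂) * (2 * ((3 / 2) * C₂ + (1 / 2) * C₉))
      = C₉ * exp (9 / 4 * C₂) * ((3 / 2 * C₉) ^ 2 + 2 * (3 / 2 * C₉) * (9 / 4 * C₂)) := by ring
    _ ≤ C₉ * exp (9 / 4 * C₂) * (9 / 4 * C₂ + 3 / 2 * C₉) ^ 2 := by
        gcongr; nlinarith [sq_nonneg C₂]
    _ ≤ C₉ * exp (9 / 4 * C₂) * exp (9 / 4 * C₂ + 3 / 2 * C₉) := by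
        gcongr; exact sq_le_exp_of_nonneg (by positivity)
    _ = C₉ * exp (3 * ((3 / 2) * C₂ + (1 / 2) * C₉)) := by
        rw [mul_assoc, ← exp_add]; ring_nf

end

theorem E_L2_distance_growth_general
    (K C₂ C₉ l₀ : ℝ) (hK : 0 < K) (hC₂ : 0 ≤ C₂) (hC₉ : 0 < C₉) (hl₀ : 0 ≤ l₀)
    (C₁₀' C₁₀ : ℝ)
    (hC₁₀' : C₁₀' = (3/2) * C₂ + (1/2) * C₉)
    (hC₁₀ : C₁₀ = C₉ * Real.exp (3 * C₁₀') / (2 * C₁₀'))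
    (E : ℝ → ℝ)
    (hE0 : E l₀ = 0)
    (hElip : ∀ x y : ℝ, l₀ ≤ x → ∃ C : NNReal, LipschitzOnWith C E (Set.Icc x y))
    (hae : ∀ᵐ l ∂(volume.restrict (Set.Ici l₀)),
      DifferentiableAt ℝ E l →
        deriv E l ≤ K^2 * (1 + (3/2) * C₂ * Real.exp (-(2/3) * K^2 * l)) * E l
          + C₉ * Real.sqrt K * Real.exp (K^2 * l / 6) * Real.sqrt (E l)) :
    ∀ l, l₀ ≤ l →
      E l ≤ (C₁₀ / K^3) * Real.exp (-(2/3) * K^2 * l₀) * Real.exp (K^2 * l) := by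
  intro l hl
  obtain ⟨C, hC⟩ := hElip l₀ l le_rfl
  have hE : AbsolutelyContinuousOnInterval E l₀ l :=
    (uIcc_of_le hl ▸ hC).absolutelyContinuousOnInterval
  have hbarrier : ∀ δ > 0, E l ≤ barrier K C₂ C₉ l₀ δ l ^ 2 := fun δ hδ =>
    hE.le_sq_of_ae_deriv_le hl (continuous_growthRate K C₂).continuousOn
      (continuous_forcing K C₉).continuousOn (fun _ _ => growthRate_nonneg hC₂)
      (fun _ _ => forcing_nonneg hC₉.le)
      (ae_restrict_of_ae_restrict_of_subset Icc_subset_Ici_self hae)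
      (fun t _ => hasDerivAt_barrier K C₂ C₉ l₀ δ t) (fun _ ht => barrier_pos hC₉.le hδ ht.1)
      (fun _ ht => growthRate_mul_barrier_add_forcing_lt hK hC₂ hC₉.le hδ ht.1)
      (by rw [hE0, barrier_initial]; positivity)
  have hlim : E l ≤ barrier K C₂ C₉ l₀ 0 l ^ 2 :=
    ge_of_tendsto (((continuous_barrier_delta K C₂ C₉ l₀ l).pow 2).tendsto 0 |>.mono_left
      nhdsWithin_le_nhds) (eventually_nhdsWithin_of_forall (s := Ioi 0) hbarrier)
  subst hC₁₀' hC₁₀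
  calc E l ≤ barrier K C₂ C₉ l₀ 0 l ^ 2 := hlim
    _ ≤ 9 / 4 * C₉ ^ 2 * exp (9 / 4 * C₂) / K ^ 3 * exp (-(2 / 3) * K ^ 2 * l₀) *
          exp (K ^ 2 * l) := barrier_zero_sq_le hK hC₂ hl₀ hl
    _ ≤ _ := by gcongr; exact mul_sq_exp_le hC₂ hC₉

/-- Analytic core of Lemma 6.3 (growth of the L² distance `E`): if
`E : [λ₀,∞) → [0,∞)` is locally Lipschitz with `E λ₀ = 0` and a.e. satisfies
`E' ≤ K²(1 + (3/2)C₂ e^{−(2/3)K²λ}) E + C₉ √K e^{K²λ/6} √E`, then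
`E λ ≤ (C₁₀/K³) e^{−(2/3)K²λ₀} e^{K²λ}` for all `λ ≥ λ₀`, where
`C'₁₀ = (3/2)C₂ + (1/2)C₉` and `C₁₀ = C₉ e^{3C'₁₀}/(2C'₁₀)`. -/
theorem E_L2_distance_growth
    (K C₂ C₉ l₀ : ℝ) (hK : 0 < K) (hC₂ : 0 ≤ C₂) (hC₉ : 0 < C₉) (hl₀ : 0 ≤ l₀)
    (C₁₀' C₁₀ : ℝ)
    (hC₁₀' : C₁₀' = (3/2) * C₂ + (1/2) * C₉)
    (hC₁₀ : C₁₀ = C₉ * Real.exp (3 * C₁₀') / (2 * C₁₀'))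
    (E : ℝ → ℝ)
    (hEnonneg : ∀ l, l₀ ≤ l → 0 ≤ E l)
    (hE0 : E l₀ = 0)
    (hElip : ∀ x y : ℝ, l₀ ≤ x → ∃ C : NNReal, LipschitzOnWith C E (Set.Icc x y))
    (hae : ∀ᵐ l ∂(volume.restrict (Set.Ici l₀)),
      DifferentiableAt ℝ E l →
        deriv E l ≤ K^2 * (1 + (3/2) * C₂ * Real.exp (-(2/3) * K^2 * l)) * E l
          + C₉ * Real.sqrt K * Real.exp (K^2 * l / 6) * Real.sqrt (E l)) :
    ∀ l, l₀ ≤ l →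
      E l ≤ (C₁₀ / K^3) * Real.exp (-(2/3) * K^2 * l₀) * Real.exp (K^2 * l) :=
  E_L2_distance_growth_general K C₂ C₉ l₀ hK hC₂ hC₉ hl₀ C₁₀' C₁₀ hC₁₀' hC₁₀ E hE0 hElip hae
end

section
/- Uniformity of a nonnegative periodic function with small L² gradient (analytic core of Lemma 7.2): Let L ≥ 1, k > 0 and ε > 0. Let f : ℝ → ℝ be continuously differentiable, periodic with period L, and nonnegative. Suppose ∫₀^L f'(z)² dz ≤ ε² and ∫₀^L |f(z)² − k²| dz ≤ k·ε. Then |f(z) − k| ≤ 2ε for all z ∈ ℝ. -/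
/-!
Fix `a`. Integrating the pointwise AM-GM bound `|f'| ≤ f'² / (2ε) + ε / 2` over `[a, z] ⊆ [a, a + 1]`
gives `|f z - f a| ≤ ε`, since by periodicity `∫ₐᶻ f'² ≤ ∫₀ᴸ f'² ≤ ε²`. Hence `|f - k| ≥ |f a - k| - ε`
on `[a, a + 1]`, and as `|f² - k²| = |f - k| (f + k) ≥ k |f - k|` for `f ≥ 0`,
`k (|f a - k| - ε) ≤ ∫ₐ^(a+1) |f² - k²| ≤ ∫₀ᴸ |f² - k²| ≤ k ε`.
-/

open intervalIntegral

theorem Function.Periodic.deriv {f : ℝ → ℝ} {c : ℝ} (hf : Function.Periodic f c) :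
    Function.Periodic (deriv f) c := fun x => by
  rw [← deriv_comp_add_const, show (fun y => f (y + c)) = f from funext hf]

theorem Function.Periodic.intervalIntegral_le_of_nonneg {g : ℝ → ℝ} {L t : ℝ}
    (hg : Function.Periodic g L) (hcont : Continuous g) (hnonneg : ∀ x, 0 ≤ g x)
    (ht : 0 ≤ t) (htL : t ≤ L) (a : ℝ) :
    ∫ x in a..a + t, g x ≤ ∫ x in (0 : ℝ)..L, g x :=
  calc ∫ x in a..a + t, g x
      ≤ ∫ x in a..a + L, g x :=
        integral_mono_interval le_rfl (by linarith) (by linarith)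
          (Filter.Eventually.of_forall hnonneg) (hcont.intervalIntegrable _ _)
    _ = ∫ x in (0 : ℝ)..L, g x := by simpa using hg.intervalIntegral_add_eq a 0

theorem abs_le_sq_div_add {y δ : ℝ} (hδ : 0 < δ) : |y| ≤ y ^ 2 / (2 * δ) + δ / 2 := by
  rw [div_add' _ _ _ (by positivity), le_div_iff₀ (by positivity), ← sq_abs y]
  nlinarith [sq_nonneg (|y| - δ)]

theorem abs_sub_le_integral_deriv_sq {f : ℝ → ℝ} (hf : ContDiff ℝ 1 f) {a b δ : ℝ}
    (hab : a ≤ b) (hδ : 0 < δ) :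
    |f b - f a| ≤ (∫ x in a..b, deriv f x ^ 2) / (2 * δ) + (b - a) * δ / 2 := by
  have hf' : Continuous (deriv f) := hf.continuous_deriv le_rfl
  have hsq : IntervalIntegrable (fun x => deriv f x ^ 2 / (2 * δ)) MeasureTheory.volume a b :=
    ((hf'.pow 2).div_const _).intervalIntegrable a b
  calc |f b - f a|
      = |∫ x in a..b, deriv f x| := by
        rw [integral_deriv_eq_sub (fun x _ => hf.differentiable one_ne_zero x)
          (hf'.intervalIntegrable a b)]
    _ ≤ ∫ x in a..b, |deriv f x| := abs_integral_le_integral_abs hab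
    _ ≤ ∫ x in a..b, (deriv f x ^ 2 / (2 * δ) + δ / 2) :=
        integral_mono_on hab (hf'.abs.intervalIntegrable a b)
          (hsq.add intervalIntegrable_const) fun x _ => abs_le_sq_div_add hδ
    _ = (∫ x in a..b, deriv f x ^ 2) / (2 * δ) + (b - a) * δ / 2 := by
        rw [integral_add hsq intervalIntegrable_const, integral_div, integral_const, smul_eq_mul,
          mul_div_assoc]

theorem abs_sub_le_of_integral_deriv_sq_le {f : ℝ → ℝ} (hf : ContDiff ℝ 1 f) {a b ε : ℝ}
    (hab : a ≤ b) (hba : b - a ≤ 1) (hε : 0 < ε) (hgrad : ∫ x in a..b, deriv f x ^ 2 ≤ ε ^ 2) :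
    |f b - f a| ≤ ε := by
  have hamgm := abs_sub_le_integral_deriv_sq hf hab hε
  have : (∫ x in a..b, deriv f x ^ 2) / (2 * ε) ≤ ε / 2 := by
    rw [div_le_iff₀ (by positivity)]; nlinarith
  nlinarith

theorem mul_abs_sub_le_abs_sq_sub_sq {x k : ℝ} (hx : 0 ≤ x) (hk : 0 ≤ k) :
    k * |x - k| ≤ |x ^ 2 - k ^ 2| := by
  rw [show x ^ 2 - k ^ 2 = (x - k) * (x + k) by ring, abs_mul, abs_of_nonneg (add_nonneg hx hk),
    mul_comm k]
  exact mul_le_mul_of_nonneg_left (by linarith) (abs_nonneg _)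

/-- Uniformity of a nonnegative periodic function with small L² gradient
(analytic core of Lemma 7.2): if `f` is C¹, `L`-periodic (`L ≥ 1`), nonnegative,
with `∫₀^L f'² ≤ ε²` and `∫₀^L |f² − k²| ≤ kε`, then `|f − k| ≤ 2ε` everywhere. -/
theorem small_gradient_uniformity
    (L k ε : ℝ) (hL : 1 ≤ L) (hk : 0 < k) (hε : 0 < ε)
    (f : ℝ → ℝ) (hf : ContDiff ℝ 1 f)
    (hper : ∀ z, f (z + L) = f z)
    (hnonneg : ∀ z, 0 ≤ f z)
    (hgrad : ∫ z in (0:ℝ)..L, (deriv f z)^2 ≤ ε^2)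
    (hint : ∫ z in (0:ℝ)..L, |(f z)^2 - k^2| ≤ k * ε) :
    ∀ z, |f z - k| ≤ 2 * ε := by
  intro a
  have hperiodic : Function.Periodic f L := hper
  have hosc : ∀ z ∈ Set.Icc a (a + 1), |f z - f a| ≤ ε := fun z ⟨haz, hza⟩ => by
    have := (hperiodic.deriv.comp fun y => y ^ 2).intervalIntegral_le_of_nonneg
      ((continuous_pow 2).comp (hf.continuous_deriv le_rfl)) (fun x => sq_nonneg _)
      (sub_nonneg.2 haz) (by linarith) a
    simp only [Function.comp_apply, add_sub_cancel] at this
    exact abs_sub_le_of_integral_deriv_sq_le hf haz (by linarith) hε (this.trans hgrad)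
  have hpointwise : ∀ z ∈ Set.Icc a (a + 1), k * (|f a - k| - ε) ≤ |f z ^ 2 - k ^ 2| :=
    fun z hz => by
      have : |f a - k| - ε ≤ |f z - k| := by
        linarith [abs_sub_le (f a) (f z) k, abs_sub_comm (f a) (f z), hosc z hz]
      exact (mul_le_mul_of_nonneg_left this hk.le).trans
        (mul_abs_sub_le_abs_sq_sub_sq (hnonneg z) hk.le)
  have hcont : Continuous fun z => |f z ^ 2 - k ^ 2| :=
    ((hf.continuous.pow 2).sub continuous_const).abs
  have hlower : k * (|f a - k| - ε) ≤ ∫ z in a..a + 1, |f z ^ 2 - k ^ 2| := by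
    simpa using integral_mono_on (by linarith) intervalIntegrable_const
      (hcont.intervalIntegrable a (a + 1)) hpointwise (μ := MeasureTheory.volume)
  have hupper : ∫ z in a..a + 1, |f z ^ 2 - k ^ 2| ≤ k * ε :=
    ((hperiodic.comp fun y => |y ^ 2 - k ^ 2|).intervalIntegral_le_of_nonneg hcont
      (fun _ => abs_nonneg _) zero_le_one hL a).trans hint
  linarith [le_of_mul_le_mul_left (hlower.trans hupper) hk]
end

section
/- ODE comparison underlying the bound on the maximum of the mean curvature (Theorem 2.2): Let a > 0 and λ₁ > 0, and let u : [0,λ₁] → ℝ be locally Lipschitz with u(λ) ≥ 0 for all λ, such that at almost every λ ∈ [0,λ₁] at which u is differentiable and u(λ) > a, one has u'(λ) ≤ −(1/3) u(λ) (u(λ)² − a²). Then max(u(λ₁) − a, 0) ≤ e^{−(2/3)a²λ₁} max(u(0) − a, 0); in particular u(λ₁) ≤ a + e^{−(2/3)a²λ₁} max(u(0) − a, 0). -/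
/-!
With `w = max (u - a) 0`, the differential inequality and `u (u + a) (u - a) ≥ 2 a² (u - a)` on
`{u > a}` give `w' ≤ -(2/3) a² w` almost everywhere, so `exp ((2/3) a² λ) w λ` is an absolutely
continuous function with a.e. nonpositive derivative, hence nonincreasing by the fundamental theorem
of calculus for absolutely continuous functions.
-/

open Set MeasureTheory

theorem AbsolutelyContinuousOnInterval.le_of_ae_deriv_nonpos {f : ℝ → ℝ} {a b : ℝ}
    (hab : a ≤ b) (hf : AbsolutelyContinuousOnInterval f a b)
    (h : ∀ᵐ x ∂volume.restrict (Icc a b), deriv f x ≤ 0) :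
    f b ≤ f a := by
  have := intervalIntegral.integral_nonneg_of_ae_restrict hab (h.mono fun _ hx => neg_nonneg.2 hx)
  rw [intervalIntegral.integral_neg, hf.integral_deriv_eq_sub] at this
  linarith

theorem AbsolutelyContinuousOnInterval.le_exp_mul_of_ae_deriv_le {f : ℝ → ℝ} {a b c : ℝ}
    (hab : a ≤ b) (hf : AbsolutelyContinuousOnInterval f a b)
    (h : ∀ᵐ x ∂volume.restrict (Icc a b), deriv f x ≤ -c * f x) :
    f b ≤ Real.exp (-c * (b - a)) * f a := by
  have hexp : AbsolutelyContinuousOnInterval (fun x => Real.exp (c * x)) a b :=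
    (by fun_prop : ContDiff ℝ 1 fun x => Real.exp (c * x)).contDiffOn.absolutelyContinuousOnInterval
  have hmono : Real.exp (c * b) * f b ≤ Real.exp (c * a) * f a := by
    refine (hexp.fun_mul hf).le_of_ae_deriv_nonpos hab ?_
    have hdiff : ∀ᵐ x ∂volume.restrict (Icc a b), DifferentiableAt ℝ f x := by
      rw [← uIcc_of_le hab, ae_restrict_iff' measurableSet_uIcc]
      exact hf.ae_differentiableAt
    filter_upwards [h, hdiff] with x hx hfx
    have hderiv : HasDerivAt (fun x => Real.exp (c * x) * f x)
        (Real.exp (c * x) * c * f x + Real.exp (c * x) * deriv f x) x := by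
      simpa using ((hasDerivAt_id x).const_mul c).exp.fun_mul hfx.hasDerivAt
    rw [hderiv.deriv]
    nlinarith [Real.exp_pos (c * x)]
  calc f b = Real.exp (-(c * b)) * (Real.exp (c * b) * f b) := by
        rw [← mul_assoc, ← Real.exp_add, neg_add_cancel, Real.exp_zero, one_mul]
    _ ≤ Real.exp (-(c * b)) * (Real.exp (c * a) * f a) := by gcongr
    _ = Real.exp (-c * (b - a)) * f a := by
        rw [← mul_assoc, ← Real.exp_add]; ring_nf

theorem deriv_max_sub_const_zero_le {u : ℝ → ℝ} {x a c : ℝ} (hu : DifferentiableAt ℝ u x)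
    (h : a < u x → deriv u x ≤ -c * (u x - a)) :
    deriv (fun y => max (u y - a) 0) x ≤ -c * max (u x - a) 0 := by
  rcases lt_trichotomy (u x) a with hlt | heq | hgt
  · have hzero : (fun y => max (u y - a) 0) =ᶠ[nhds x] fun _ => 0 := by
      filter_upwards [hu.continuousAt.eventually (eventually_lt_nhds hlt)] with y hy
      exact max_eq_right (by linarith)
    rw [hzero.deriv_eq, deriv_const, max_eq_right (by linarith)]
    simp
  · -- `deriv` vanishes at a local minimum even where the function is not differentiable.
    have hmin : IsLocalMin (fun y => max (u y - a) 0) x :=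
      Filter.Eventually.of_forall fun y => by simp [heq]
    rw [hmin.deriv_eq_zero, heq]
    simp
  · have hsub : (fun y => max (u y - a) 0) =ᶠ[nhds x] fun y => u y - a := by
      filter_upwards [hu.continuousAt.eventually (eventually_gt_nhds hgt)] with y hy
      exact max_eq_left (by linarith)
    rw [hsub.deriv_eq, deriv_sub_const, max_eq_left (by linarith)]
    exact h hgt

theorem neg_third_mul_sq_sub_sq_le {a u : ℝ} (ha : 0 < a) (hu : a < u) :
    -(1/3) * u * (u ^ 2 - a ^ 2) ≤ -(2/3 * a ^ 2) * (u - a) := by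
  nlinarith [mul_nonneg (sq_nonneg (u - a)) (by linarith : (0:ℝ) ≤ u + 2 * a)]

theorem mean_curvature_max_ode_comparison_general
    (a l₁ : ℝ) (ha : 0 < a) (hl₁ : 0 < l₁)
    (u : ℝ → ℝ)
    (hlip : ∃ C : NNReal, LipschitzOnWith C u (Set.Icc 0 l₁))
    (hae : ∀ᵐ l ∂(volume.restrict (Set.Icc (0 : ℝ) l₁)),
      (DifferentiableAt ℝ u l ∧ a < u l) →
        deriv u l ≤ -(1/3) * u l * ((u l)^2 - a^2)) :
    max (u l₁ - a) 0 ≤ Real.exp (-(2/3) * a^2 * l₁) * max (u 0 - a) 0 ∧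
    u l₁ ≤ a + Real.exp (-(2/3) * a^2 * l₁) * max (u 0 - a) 0 := by
  obtain ⟨C, hC⟩ := hlip
  rw [← uIcc_of_le hl₁.le] at hC
  have hw : AbsolutelyContinuousOnInterval (fun l => max (u l - a) 0) 0 l₁ :=
    (((LipschitzWith.id.sub (LipschitzWith.const a)).max_const 0).comp_lipschitzOnWith
      hC).absolutelyContinuousOnInterval
  have hu_diff : ∀ᵐ l ∂volume.restrict (Icc 0 l₁), DifferentiableAt ℝ u l := by
    rw [← uIcc_of_le hl₁.le, ae_restrict_iff' measurableSet_uIcc]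
    exact hC.absolutelyContinuousOnInterval.ae_differentiableAt
  have hw_deriv : ∀ᵐ l ∂volume.restrict (Icc 0 l₁),
      deriv (fun l => max (u l - a) 0) l ≤ -(2/3 * a ^ 2) * max (u l - a) 0 := by
    filter_upwards [hae, hu_diff] with l hl hul
    exact deriv_max_sub_const_zero_le hul fun hgt =>
      (hl ⟨hul, hgt⟩).trans (neg_third_mul_sq_sub_sq_le ha hgt)
  have hdecay := hw.le_exp_mul_of_ae_deriv_le hl₁.le hw_deriv
  rw [show -(2/3 * a ^ 2) * (l₁ - 0) = -(2/3) * a ^ 2 * l₁ by ring] at hdecay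
  exact ⟨hdecay, by linarith [le_max_left (u l₁ - a) 0]⟩

/-- ODE comparison underlying the bound on the maximum of the mean curvature
(Theorem 2.2): if `u : [0,λ₁] → [0,∞)` is locally Lipschitz and a.e. on
`{u > a}` (where differentiable) satisfies `u' ≤ −(1/3)u(u² − a²)`, then
`max (u λ₁ − a) 0 ≤ e^{−(2/3)a²λ₁} max (u 0 − a) 0`; in particular
`u λ₁ ≤ a + e^{−(2/3)a²λ₁} max (u 0 − a) 0`. -/
theorem mean_curvature_max_ode_comparison
    (a l₁ : ℝ) (ha : 0 < a) (hl₁ : 0 < l₁)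
    (u : ℝ → ℝ)
    (hlip : ∃ C : NNReal, LipschitzOnWith C u (Set.Icc 0 l₁))
    (hnonneg : ∀ l ∈ Set.Icc (0 : ℝ) l₁, 0 ≤ u l)
    (hae : ∀ᵐ l ∂(volume.restrict (Set.Icc (0 : ℝ) l₁)),
      (DifferentiableAt ℝ u l ∧ a < u l) →
        deriv u l ≤ -(1/3) * u l * ((u l)^2 - a^2)) :
    max (u l₁ - a) 0 ≤ Real.exp (-(2/3) * a^2 * l₁) * max (u 0 - a) 0 ∧
    u l₁ ≤ a + Real.exp (-(2/3) * a^2 * l₁) * max (u 0 - a) 0 :=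
  mean_curvature_max_ode_comparison_general a l₁ ha hl₁ u hlip hae
end
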